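/- Let n and R be positive integers, α > 0, δ ≥ 0, η ∈ (0,1), and 0 < x_max < 1. Let C ⊂ (0, x_max]^n be a finite codebook with |C| ≤ 2^R, and let x ∈ (0, x_max]^n be such that some c* ∈ C satisfies (1/n)‖x − c*‖₂² ≤ δ. Let y₁, …, y_n be independent random variables with y_i ∼ Poisson(α x_i), and let x̂ be any element of argmin_{c ∈ C} ‖c − y/α‖₂². Assume 4 (ln 2)(1+η) R ≤ 9 n x_max⁴ α. Then with probability at least 1 − 2^{−ηR+2}, one has (1/n)‖x − x̂‖₂² ≤ δ + C √(R/(n α)), where C = 4 √(ln 2) (√(1+η) + √η + 1). -/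

import Mathlib

/-!
Since `x̂` minimises `‖c - y/α‖²` over the codebook and `c* ∈ C`, expanding the squares gives
`‖x - x̂‖² ≤ ‖x - c*‖² + 2 ⟪x̂ - c*, y/α - x⟫`. A large error therefore forces, for some codeword
`c`, the centred Poisson sum `⟪c - c*, y/α - x⟫` to exceed `n D / 2`, where `D = C √(R/(nα))`.
For a fixed `c` this is a Chernoff bound: the Poisson cumulant `r (eˢ - 1 - s)` is at most `r s²`
for `s ≤ 1`, which gives the sub-Gaussian tail `exp (-T² / 4v)` for `∑ cᵢ (yᵢ - rᵢ)` whenever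
`v ≥ ∑ rᵢ cᵢ²` and `T · max cᵢ ≤ 2v`. The hypothesis on `R` keeps `T = n D / 2` in that range,
where the tail is `2^(-(1+η)R)`, and a union bound over the at most `2^R` codewords finishes.
-/

open MeasureTheory ProbabilityTheory Real
open scoped NNReal Nat

theorem Real.exp_le_one_add_add_sq {x : ℝ} (hx : x ≤ 1) : exp x ≤ 1 + x + x ^ 2 := by
  rcases le_total 0 x with hx0 | hx0
  · have h := Real.exp_bound' hx0 hx (n := 3) (by norm_num)
    norm_num [Finset.sum_range_succ] at h
    nlinarith [pow_le_one₀ hx0 hx (n := 1)]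
  · have h1 : 1 - x ≤ exp (-x) := by linarith [add_one_le_exp (-x)]
    have h2 : exp x * exp (-x) = 1 := by rw [← exp_add]; simp
    nlinarith [exp_pos x, exp_pos (-x)]

namespace ProbabilityTheory

lemma hasSum_poissonMeasure_mul_exp (r : ℝ≥0) (t : ℝ) :
    HasSum (fun n : ℕ => exp (-r) * r ^ n / n ! * exp (t * n)) (exp (r * (exp t - 1))) := by
  have h := (NormedSpace.expSeries_div_hasSum_exp ((r : ℝ) * exp t)).mul_left (exp (-r))
  have hterm (n : ℕ) :
      exp (-r) * ((r * exp t) ^ n / n !) = exp (-r) * r ^ n / n ! * exp (t * n) := by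
    rw [mul_pow, ← exp_nat_mul, mul_comm (n : ℝ) t]
    ring
  have hsum : exp (-r) * NormedSpace.exp ((r : ℝ) * exp t) = exp (r * (exp t - 1)) := by
    rw [← exp_eq_exp_ℝ, ← exp_add]
    ring_nf
  simpa only [hterm, hsum] using h

lemma mgf_natCast_poissonMeasure (r : ℝ≥0) (t : ℝ) :
    mgf (fun n : ℕ => (n : ℝ)) (poissonMeasure r) t = exp (r * (exp t - 1)) := by
  rw [mgf, integral_poissonMeasure, ← (hasSum_poissonMeasure_mul_exp r t).tsum_eq]
  rfl

lemma mgf_mul_sub_of_map_eq_poissonMeasure {Ω : Type*} [MeasurableSpace Ω] {P : Measure Ω}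
    {y : Ω → ℕ} (hy : Measurable y) {r : ℝ≥0} (hlaw : P.map y = poissonMeasure r) (c t : ℝ) :
    mgf (fun ω => c * ((y ω : ℝ) - r)) P t = exp (r * (exp (t * c) - 1 - t * c)) := by
  have hmgf : mgf (fun ω => (y ω : ℝ)) P (c * t) = exp (r * (exp (t * c) - 1)) := by
    rw [← mgf_natCast_poissonMeasure, ← hlaw, mgf_map hy.aemeasurable .of_discrete, mul_comm]
    rfl
  simp_rw [mgf_const_mul, sub_eq_add_neg, mgf_add_const, hmgf, ← exp_add]
  ring_nf

variable {Ω ι : Type*} [MeasurableSpace Ω] {P : Measure Ω} [IsProbabilityMeasure P] [Fintype ι]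
  {y : ι → Ω → ℕ} {r : ι → ℝ≥0}

theorem iIndepFun.measureReal_ge_le_exp_of_poisson (hindep : iIndepFun y P)
    (hy : ∀ i, Measurable (y i)) (hlaw : ∀ i, P.map (y i) = poissonMeasure (r i))
    (c : ι → ℝ) (T : ℝ) {t : ℝ} (ht : 0 ≤ t) :
    P.real {ω | T ≤ ∑ i, c i * ((y i ω : ℝ) - r i)} ≤
      exp (-t * T + ∑ i, r i * (exp (t * c i) - 1 - t * c i)) := by
  set X : ι → Ω → ℝ := fun i ω => c i * ((y i ω : ℝ) - r i)
  have hX : ∀ i, Measurable (X i) := fun i =>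
    (measurable_from_nat (f := fun k : ℕ => c i * ((k : ℝ) - r i))).comp (hy i)
  have hXindep : iIndepFun X P := hindep.comp (fun i (k : ℕ) => c i * ((k : ℝ) - r i))
    fun i => measurable_from_nat
  have hmgf : mgf (∑ i, X i) P t = exp (∑ i, r i * (exp (t * c i) - 1 - t * c i)) := by
    rw [hXindep.mgf_sum hX, exp_sum]
    exact Finset.prod_congr rfl fun i _ => mgf_mul_sub_of_map_eq_poissonMeasure (hy i) (hlaw i) _ _
  have hint : Integrable (fun ω => exp (t * (∑ i, X i) ω)) P :=
    mgf_pos_iff.mp (hmgf ▸ exp_pos _)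
  have hchernoff := measure_ge_le_exp_mul_mgf T ht hint
  simp only [hmgf, Finset.sum_apply, X] at hchernoff
  rwa [exp_add]

theorem iIndepFun.measureReal_ge_le_exp_sq_of_poisson (hindep : iIndepFun y P)
    (hy : ∀ i, Measurable (y i)) (hlaw : ∀ i, P.map (y i) = poissonMeasure (r i))
    {c : ι → ℝ} {m v T : ℝ} (hcm : ∀ i, c i ≤ m) (hv : ∑ i, r i * c i ^ 2 ≤ v)
    (hT : 0 ≤ T) (hTm : T * m ≤ 2 * v) :
    P.real {ω | T ≤ ∑ i, c i * ((y i ω : ℝ) - r i)} ≤ exp (-(T ^ 2 / (4 * v))) := by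
  rcases (le_trans (by positivity) hv : (0 : ℝ) ≤ v).eq_or_lt with rfl | hv0
  · simp [measureReal_le_one]
  set t := T / (2 * v)
  have ht : 0 ≤ t := by positivity
  have hcumulant : ∑ i, r i * (exp (t * c i) - 1 - t * c i) ≤ t ^ 2 * v := by
    calc ∑ i, r i * (exp (t * c i) - 1 - t * c i) ≤ ∑ i, r i * (t * c i) ^ 2 := by
          gcongr with i
          have htc : t * c i ≤ 1 := calc
            t * c i ≤ t * m := mul_le_mul_of_nonneg_left (hcm i) ht
            _ ≤ 1 := by rw [div_mul_eq_mul_div, div_le_one (by positivity)]; exact hTm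
          linarith [exp_le_one_add_add_sq htc]
      _ = t ^ 2 * ∑ i, r i * c i ^ 2 := by
          rw [Finset.mul_sum]
          exact Finset.sum_congr rfl fun i _ => by ring
      _ ≤ t ^ 2 * v := by gcongr
  calc _ ≤ exp (-t * T + ∑ i, r i * (exp (t * c i) - 1 - t * c i)) :=
        hindep.measureReal_ge_le_exp_of_poisson hy hlaw c T ht
    _ ≤ exp (-t * T + t ^ 2 * v) := by gcongr
    _ = exp (-(T ^ 2 / (4 * v))) := by
        congr 1
        simp only [t]
        field_simp
        ring

end ProbabilityTheory

theorem Finset.sum_sub_sq_le_of_sum_sub_sq_le {ι : Type*} (s : Finset ι) {x a b z : ι → ℝ}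
    (h : ∑ i ∈ s, (a i - z i) ^ 2 ≤ ∑ i ∈ s, (b i - z i) ^ 2) :
    ∑ i ∈ s, (x i - a i) ^ 2 ≤
      ∑ i ∈ s, (x i - b i) ^ 2 + 2 * ∑ i ∈ s, (a i - b i) * (z i - x i) := by
  have hdiff : ∑ i ∈ s, (x i - a i) ^ 2 - ∑ i ∈ s, (x i - b i) ^ 2
      - 2 * ∑ i ∈ s, (a i - b i) * (z i - x i)
      = ∑ i ∈ s, (a i - z i) ^ 2 - ∑ i ∈ s, (b i - z i) ^ 2 := by
    simp only [Finset.mul_sum, ← Finset.sum_sub_distrib]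
    exact Finset.sum_congr rfl fun i _ => by ring
  linarith

theorem mul_div_two_le_sum_mul_sub_of_sum_sub_sq_le {n : ℕ} (hn : 0 < n)
    {x a b : EuclideanSpace ℝ (Fin n)} {z : Fin n → ℝ} {δ D : ℝ}
    (hmin : ∑ i, (a i - z i) ^ 2 ≤ ∑ i, (b i - z i) ^ 2)
    (hb : (1 / n : ℝ) * ‖x - b‖ ^ 2 ≤ δ) (ha : δ + D < (1 / n : ℝ) * ‖x - a‖ ^ 2) :
    n * D / 2 ≤ ∑ i, (a i - b i) * (z i - x i) := by
  have hn' : (0 : ℝ) < n := by exact_mod_cast hn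
  have hcompare := Finset.sum_sub_sq_le_of_sum_sub_sq_le Finset.univ (x := x) hmin
  simp only [EuclideanSpace.real_norm_sq_eq, PiLp.sub_apply, one_div, inv_mul_le_iff₀ hn',
    lt_inv_mul_iff₀ hn'] at ha hb
  linarith

theorem MeasureTheory.ofReal_one_sub_le_measure {Ω : Type*} [MeasurableSpace Ω] {μ : Measure Ω}
    [IsProbabilityMeasure μ] {s : Set Ω} {ε : ℝ} (h : μ.real sᶜ ≤ ε) :
    ENNReal.ofReal (1 - ε) ≤ μ s := by
  have hcover : 1 ≤ μ.real s + μ.real sᶜ := by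
    simpa using measureReal_union_le (μ := μ) s sᶜ
  rw [← ofReal_measureReal]
  exact ENNReal.ofReal_le_ofReal (by linarith)

noncomputable def excessDistortion (η R n α : ℝ) : ℝ :=
  4 * √(log 2) * (√(1 + η) + √η + 1) * √(R / (n * α))

section excessDistortion

variable {η R n α : ℝ}

lemma sq_excessDistortion (h : 0 ≤ R / (n * α)) :
    excessDistortion η R n α ^ 2 = 16 * log 2 * (√(1 + η) + √η + 1) ^ 2 * (R / (n * α)) := by
  simp only [excessDistortion, mul_pow, sq_sqrt (log_pos one_lt_two).le, sq_sqrt h]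
  ring

lemma one_add_mul_mul_excessDistortion_le {xmax : ℝ} (hη : 0 ≤ η) (hR : 0 ≤ R) (hnα : 0 < n * α)
    (hxmax0 : 0 ≤ xmax) (hxmax1 : xmax ≤ 1)
    (hRsmall : 4 * log 2 * (1 + η) * R ≤ 9 * n * xmax ^ 4 * α) :
    (1 + η) * xmax * excessDistortion η R n α ≤ 4 * (√(1 + η) + √η + 1) ^ 2 := by
  set ρ := √(1 + η) + √η + 1
  have ha2 : √(1 + η) ^ 2 = 1 + η := sq_sqrt (by linarith)
  have hLas : √(log 2) * √(1 + η) * √(R / (n * α)) ≤ 3 / 2 * xmax ^ 2 := by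
    rw [← pow_le_pow_iff_left₀ (by positivity) (by positivity) two_ne_zero]
    simp only [mul_pow, sq_sqrt (log_pos one_lt_two).le, sq_sqrt (div_nonneg hR hnα.le), ha2]
    rw [mul_div_assoc', div_le_iff₀ hnα]
    linarith
  have hkey : (1 + η) * xmax * (√(log 2) * √(R / (n * α))) ≤ ρ := calc
    _ = √(1 + η) * (√(log 2) * √(1 + η) * √(R / (n * α))) * xmax := by
        linear_combination (-(√(log 2) * √(R / (n * α)) * xmax)) * ha2
    _ ≤ √(1 + η) * (3 / 2 * xmax ^ 2) * xmax := by gcongr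
    _ = 3 / 2 * √(1 + η) * xmax ^ 3 := by ring
    _ ≤ 3 / 2 * √(1 + η) := mul_le_of_le_one_right (by positivity) (pow_le_one₀ hxmax0 hxmax1)
    _ ≤ ρ := by
        have ha_le : √(1 + η) ≤ √η + 1 :=
          sqrt_le_iff.2 ⟨by positivity, by nlinarith [sq_sqrt hη, sqrt_nonneg η]⟩
        linarith [sqrt_nonneg (1 + η)]
  calc (1 + η) * xmax * excessDistortion η R n α
      = 4 * ρ * ((1 + η) * xmax * (√(log 2) * √(R / (n * α)))) := by
        simp only [excessDistortion, ρ]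
        ring
    _ ≤ 4 * ρ * ρ := by gcongr
    _ = 4 * ρ ^ 2 := by ring

end excessDistortion

section PoissonModel

variable {n : ℕ} {Ω : Type*} [MeasurableSpace Ω] {P : Measure Ω} [IsProbabilityMeasure P]
  {y : Fin n → Ω → ℕ} {α η xmax : ℝ} {x : Fin n → ℝ}

theorem measureReal_deviation_ge_excessDistortion_le (hn : 0 < n) (R : ℕ)
    (hα : 0 < α) (hη : 0 ≤ η) (hxmax0 : 0 ≤ xmax) (hxmax1 : xmax ≤ 1)
    (hx : ∀ i, x i ∈ Set.Ioc 0 xmax) (hyindep : iIndepFun y P) (hy : ∀ i, Measurable (y i))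
    (hlaw : ∀ i, P.map (y i) = poissonMeasure (α * x i).toNNReal)
    (hRsmall : 4 * log 2 * (1 + η) * R ≤ 9 * n * xmax ^ 4 * α)
    {w : Fin n → ℝ} (hw : ∀ i, |w i| ≤ xmax) :
    P.real {ω | n * excessDistortion η R n α / 2 ≤ ∑ i, w i / α * ((y i ω : ℝ) - α * x i)} ≤
      2 ^ (-((1 + η) * R)) := by
  set D := excessDistortion η R n α
  set ρ := √(1 + η) + √η + 1 with hρ
  -- `v` is chosen so that `T ^ 2 / (4 * v)` is exactly `(1 + η) * R * log 2` for `T = n * D / 2`.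
  set v := n * ρ ^ 2 / ((1 + η) * α) with hv
  have hr : ∀ i, ((α * x i).toNNReal : ℝ) = α * x i :=
    fun i => coe_toNNReal _ (mul_pos hα (hx i).1).le
  have hvar : ∑ i, ((α * x i).toNNReal : ℝ) * (w i / α) ^ 2 ≤ v := calc
    _ ≤ ∑ _i : Fin n, xmax ^ 3 / α := Finset.sum_le_sum fun i _ => by
        have hw2 : w i ^ 2 ≤ xmax ^ 2 := sq_le_sq' (abs_le.1 (hw i)).1 (abs_le.1 (hw i)).2
        calc ((α * x i).toNNReal : ℝ) * (w i / α) ^ 2 = x i * w i ^ 2 / α := by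
              rw [hr]; field_simp
          _ ≤ xmax * xmax ^ 2 / α := by gcongr; exact (hx i).2
          _ = xmax ^ 3 / α := by ring
    _ = n * xmax ^ 3 / α := by simp [mul_div_assoc]
    _ ≤ v := by
        have hρ2 : (1 + η) * xmax ^ 3 ≤ ρ ^ 2 := calc
          (1 + η) * xmax ^ 3 ≤ √(1 + η) ^ 2 := by
            rw [sq_sqrt (by linarith)]
            exact mul_le_of_le_one_right (by linarith) (pow_le_one₀ hxmax0 hxmax1)
          _ ≤ ρ ^ 2 := by gcongr; linarith [sqrt_nonneg η]
        rw [hv, div_le_div_iff₀ hα (by positivity)]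
        nlinarith [mul_le_mul_of_nonneg_left hρ2 (by positivity : (0 : ℝ) ≤ n * α)]
  have hTm : n * D / 2 * (xmax / α) ≤ 2 * v := calc
    _ = n * ((1 + η) * xmax * D) / (2 * (1 + η) * α) := by field_simp
    _ ≤ n * (4 * ρ ^ 2) / (2 * (1 + η) * α) := by
        gcongr n * ?_ / _
        exact one_add_mul_mul_excessDistortion_le hη (Nat.cast_nonneg R) (by positivity)
          hxmax0 hxmax1 hRsmall
    _ = 2 * v := by rw [hv]; field_simp; ring
  have hexp : (n * D / 2) ^ 2 / (4 * v) = (1 + η) * R * log 2 := by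
    have hρ0 : 0 < ρ := by positivity
    rw [div_pow, mul_pow, sq_excessDistortion (by positivity), ← hρ, hv]
    field_simp
    ring
  have hbound := hyindep.measureReal_ge_le_exp_sq_of_poisson hy hlaw (c := fun i => w i / α)
    (fun i => div_le_div_of_nonneg_right (le_of_abs_le (hw i)) hα.le) hvar
    (by simp only [D, excessDistortion]; positivity) hTm
  simp only [hr, hexp] at hbound
  rwa [rpow_def_of_pos two_pos, show log 2 * -((1 + η) * R) = -((1 + η) * R * log 2) by ring]

end PoissonModel

theorem stmt3_general
    (n R : ℕ) (hn : 0 < n)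
    (α : ℝ) (hα : 0 < α) (δ : ℝ)
    (η : ℝ) (hη0 : 0 < η)
    (xmax : ℝ) (hxmax0 : 0 < xmax) (hxmax1 : xmax < 1)
    (C : Finset (EuclideanSpace ℝ (Fin n)))
    (hCrange : ∀ c ∈ C, ∀ i, c i ∈ Set.Ioc 0 xmax)
    (hCcard : (C.card : ℝ) ≤ 2 ^ R)
    (x : EuclideanSpace ℝ (Fin n)) (hx : ∀ i, x i ∈ Set.Ioc 0 xmax)
    (hdist : ∃ c ∈ C, (1 / n : ℝ) * ‖x - c‖ ^ 2 ≤ δ)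
    {Ω : Type*} [MeasurableSpace Ω] (P : Measure Ω) [IsProbabilityMeasure P]
    (y : Fin n → Ω → ℕ) (hymeas : ∀ i, Measurable (y i))
    (hylaw : ∀ i, P.map (y i) = poissonMeasure (Real.toNNReal (α * x i)))
    (hyindep : iIndepFun y P)
    (xhat : Ω → EuclideanSpace ℝ (Fin n))
    (hmem : ∀ ω, xhat ω ∈ C)
    (hmin : ∀ ω, ∀ c ∈ C,
      ∑ i, (xhat ω i - (y i ω : ℝ) / α) ^ 2 ≤ ∑ i, (c i - (y i ω : ℝ) / α) ^ 2)
    (hRsmall : 4 * Real.log 2 * (1 + η) * R ≤ 9 * n * xmax ^ 4 * α) :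
    ENNReal.ofReal (1 - (2 : ℝ) ^ (-(η * R) + 2)) ≤
      P {ω | (1 / n : ℝ) * ‖x - xhat ω‖ ^ 2 ≤
        δ + 4 * Real.sqrt (Real.log 2) * (Real.sqrt (1 + η) + Real.sqrt η + 1) *
          Real.sqrt (R / (n * α))} := by
  obtain ⟨cs, hcs, hxcs⟩ := hdist
  set D := excessDistortion η R n α
  let bad (c : EuclideanSpace ℝ (Fin n)) : Set Ω :=
    {ω | n * D / 2 ≤ ∑ i, (c i - cs i) / α * ((y i ω : ℝ) - α * x i)}
  have hcover : {ω | (1 / n : ℝ) * ‖x - xhat ω‖ ^ 2 ≤ δ + D}ᶜ ⊆ ⋃ c ∈ C, bad c := by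
    intro ω hω
    refine Set.mem_biUnion (hmem ω) ?_
    refine (mul_div_two_le_sum_mul_sub_of_sum_sub_sq_le hn (hmin ω cs hcs) hxcs
      (not_le.1 hω)).trans_eq (Finset.sum_congr rfl fun i _ => ?_)
    field_simp
  have htail : ∀ c ∈ C, P.real (bad c) ≤ 2 ^ (-((1 + η) * R)) := fun c hc =>
    measureReal_deviation_ge_excessDistortion_le hn R hα hη0.le hxmax0.le hxmax1.le hx hyindep
      hymeas hylaw hRsmall fun i => abs_sub_le_iff.2
        ⟨by linarith [(hCrange c hc i).2, (hCrange cs hcs i).1],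
          by linarith [(hCrange c hc i).1, (hCrange cs hcs i).2]⟩
  refine ofReal_one_sub_le_measure ?_
  calc _ ≤ P.real (⋃ c ∈ C, bad c) := measureReal_mono hcover (measure_ne_top P _)
    _ ≤ ∑ c ∈ C, P.real (bad c) := measureReal_biUnion_finset_le C bad
    _ ≤ C.card * (2 : ℝ) ^ (-((1 + η) * R)) := by
        simpa using Finset.sum_le_card_nsmul C _ _ htail
    _ ≤ 2 ^ R * (2 : ℝ) ^ (-((1 + η) * R)) := by gcongr
    _ = 2 ^ (-(η * R)) := by rw [← rpow_natCast, ← rpow_add two_pos]; ring_nf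
    _ ≤ 2 ^ (-(η * R) + 2) := rpow_le_rpow_of_exponent_le one_le_two (by linarith)

/-- Compression-based denoising under Poisson noise with the squared-error surrogate:
high-probability error bound. -/
theorem stmt3
    (n R : ℕ) (hn : 0 < n) (hR : 0 < R)
    (α : ℝ) (hα : 0 < α) (δ : ℝ) (hδ : 0 ≤ δ)
    (η : ℝ) (hη0 : 0 < η) (hη1 : η < 1)
    (xmax : ℝ) (hxmax0 : 0 < xmax) (hxmax1 : xmax < 1)
    (C : Finset (EuclideanSpace ℝ (Fin n)))
    (hCrange : ∀ c ∈ C, ∀ i, c i ∈ Set.Ioc 0 xmax)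
    (hCcard : (C.card : ℝ) ≤ 2 ^ R)
    (x : EuclideanSpace ℝ (Fin n)) (hx : ∀ i, x i ∈ Set.Ioc 0 xmax)
    (hdist : ∃ c ∈ C, (1 / n : ℝ) * ‖x - c‖ ^ 2 ≤ δ)
    {Ω : Type*} [MeasurableSpace Ω] (P : Measure Ω) [IsProbabilityMeasure P]
    (y : Fin n → Ω → ℕ) (hymeas : ∀ i, Measurable (y i))
    (hylaw : ∀ i, P.map (y i) = poissonMeasure (Real.toNNReal (α * x i)))
    (hyindep : iIndepFun y P)
    (xhat : Ω → EuclideanSpace ℝ (Fin n))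
    (hmem : ∀ ω, xhat ω ∈ C)
    (hmin : ∀ ω, ∀ c ∈ C,
      ∑ i, (xhat ω i - (y i ω : ℝ) / α) ^ 2 ≤ ∑ i, (c i - (y i ω : ℝ) / α) ^ 2)
    (hRsmall : 4 * Real.log 2 * (1 + η) * R ≤ 9 * n * xmax ^ 4 * α) :
    ENNReal.ofReal (1 - (2 : ℝ) ^ (-(η * R) + 2)) ≤
      P {ω | (1 / n : ℝ) * ‖x - xhat ω‖ ^ 2 ≤
        δ + 4 * Real.sqrt (Real.log 2) * (Real.sqrt (1 + η) + Real.sqrt η + 1) *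
          Real.sqrt (R / (n * α))} :=
  stmt3_general n R hn α hα δ η hη0 xmax hxmax0 hxmax1 C hCrange hCcard x hx hdist P y hymeas hylaw
    hyindep xhat hmem hmin hRsmall
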